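/- arXiv:1108.3548 — 2 statements merged into one kernel-verified Lean document; each statement's English description precedes it below -/
import Mathlib

section
/- Let g be a finite-dimensional complex Lie algebra admitting a periodic derivation D (D^m = id for some m ≥ 1). Then the inverse linear map D^{-1} is again a derivation of g. -/
/-!
Since `X ^ m - 1` is separable, `D` is diagonalizable with eigenvalues `m`-th roots of unity, and
`D⁻¹ = D ^ (m - 1)` acts on the `α`-eigenspace `L_α` by `α⁻¹`. The Leibniz rule gives
`⁅L_α, L_β⁆ ⊆ L_(α + β)`, so on `L_α × L_β` the Leibniz rule for `D⁻¹` reduces to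
`α⁻¹ + β⁻¹ = (α + β)⁻¹` whenever the bracket is nonzero. In that case `α`, `β` and `α + β` are all
roots of unity, hence of modulus one, so their inverses are their complex conjugates, and
conjugation is additive.
-/

open Module End

lemma Complex.inv_add_inv_of_norm_eq_one {α β : ℂ} (hα : ‖α‖ = 1) (hβ : ‖β‖ = 1)
    (hαβ : ‖α + β‖ = 1) : α⁻¹ + β⁻¹ = (α + β)⁻¹ := by
  rw [Complex.inv_eq_conj hα, Complex.inv_eq_conj hβ, Complex.inv_eq_conj hαβ, map_add]

lemma LinearMap.ext₂_of_iSup_eq_top {R M N ι : Type*} [CommSemiring R] [AddCommMonoid M]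
    [Module R M] [AddCommMonoid N] [Module R N] {p : ι → Submodule R M} (hp : ⨆ i, p i = ⊤)
    {B₁ B₂ : M →ₗ[R] M →ₗ[R] N} (h : ∀ i j, ∀ x ∈ p i, ∀ y ∈ p j, B₁ x y = B₂ x y) :
    B₁ = B₂ := by
  rw [Submodule.iSup_eq_span] at hp
  refine ext_on hp fun x hx ↦ ext_on hp fun y hy ↦ ?_
  obtain ⟨i, hx⟩ := Set.mem_iUnion.mp hx
  obtain ⟨j, hy⟩ := Set.mem_iUnion.mp hy
  exact h i j x hx y hy

namespace Module.End

variable {K V : Type*} [Field K] [AddCommGroup V] [Module K V]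

lemma HasEigenvalue.pow_eq_one {f : End K V} {μ : K} {m : ℕ} (hμ : f.HasEigenvalue μ)
    (hf : f ^ m = 1) : μ ^ m = 1 := by
  obtain ⟨x, hx⟩ := hμ.exists_hasEigenvector
  exact smul_left_injective K hx.2 <| by simpa [hf] using (hx.pow_apply m).symm

lemma apply_eq_inv_smul_of_mul_eq_one {f g : End K V} (hgf : g * f = 1) {μ : K} {x : V}
    (hx : f x = μ • x) : g x = μ⁻¹ • x := by
  have hgfx : x = μ • g x := by
    rw [← map_smul, ← hx, ← mul_apply, hgf, one_apply]
  rcases eq_or_ne μ 0 with rfl | hμ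
  · rw [zero_smul] at hgfx
    rw [hgfx, map_zero, smul_zero]
  · rw [eq_inv_smul_iff₀ hμ, ← hgfx]

lemma iSup_eigenspace_eq_top_of_pow_eq_one [IsAlgClosed K] [FiniteDimensional K V] {f : End K V}
    {m : ℕ} (hm : (m : K) ≠ 0) (hf : f ^ m = 1) : ⨆ μ, f.eigenspace μ = ⊤ := by
  open Polynomial in
  refine IsSemisimple.iSup_eigenspace_eq_top <|
    isSemisimple_of_squarefree_aeval_eq_zero (p := X ^ m - C 1)
      (separable_X_pow_sub_C 1 hm one_ne_zero).squarefree ?_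
  simp [hf]

end Module.End

namespace LieDerivation

variable {R L : Type*} [CommRing R] [LieRing L] [LieAlgebra R L]

lemma lie_mem_eigenspace_add (D : LieDerivation R L L) {α β : R} {x y : L}
    (hx : x ∈ eigenspace (D : End R L) α) (hy : y ∈ eigenspace (D : End R L) β) :
    ⁅x, y⁆ ∈ eigenspace (D : End R L) (α + β) := by
  rw [mem_eigenspace_iff, coeFn_coe] at hx hy ⊢
  rw [apply_lie_eq_add, hx, hy, lie_smul, smul_lie, add_smul, add_comm]

lemma leftInverse_apply_lie_eq_add {K : Type*} [Field K] [LieAlgebra K L] (D : LieDerivation K L L)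
    (hD : ⨆ μ, eigenspace (D : End K L) μ = ⊤) {E : End K L} (hED : E * D = 1)
    (hspec : ∀ α β, HasEigenvalue (D : End K L) α → HasEigenvalue (D : End K L) β →
      HasEigenvalue (D : End K L) (α + β) → α⁻¹ + β⁻¹ = (α + β)⁻¹) (x y : L) :
    E ⁅x, y⁆ = ⁅E x, y⁆ + ⁅x, E y⁆ := by
  set B : L →ₗ[K] L →ₗ[K] L := (LieModule.toEnd K L L : L →ₗ[K] End K L)
  suffices B.compr₂ E = B ∘ₗ E + B.compl₂ E from LinearMap.congr_fun₂ this x y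
  refine LinearMap.ext₂_of_iSup_eq_top hD fun α β x hx y hy ↦ ?_
  have hxy := D.lie_mem_eigenspace_add hx hy
  rw [mem_eigenspace_iff] at hx hy hxy
  simp only [B, LinearMap.compr₂_apply, LinearMap.add_apply, LinearMap.comp_apply,
    LinearMap.compl₂_apply, LieModule.toEnd_apply_apply, LieHom.coe_toLinearMap]
  rw [apply_eq_inv_smul_of_mul_eq_one hED hx, apply_eq_inv_smul_of_mul_eq_one hED hy,
    apply_eq_inv_smul_of_mul_eq_one hED hxy, smul_lie, lie_smul, ← add_smul]
  rcases eq_or_ne ⁅x, y⁆ 0 with hz | hz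
  · simp [hz]
  have hx0 : x ≠ 0 := by rintro rfl; simp at hz
  have hy0 : y ≠ 0 := by rintro rfl; simp at hz
  rw [hspec α β (hasEigenvalue_of_hasEigenvector ⟨mem_eigenspace_iff.mpr hx, hx0⟩)
    (hasEigenvalue_of_hasEigenvector ⟨mem_eigenspace_iff.mpr hy, hy0⟩)
    (hasEigenvalue_of_hasEigenvector ⟨mem_eigenspace_iff.mpr hxy, hz⟩)]

end LieDerivation

theorem inverse_is_derivation (L : Type*) [LieRing L] [LieAlgebra ℂ L]
    [FiniteDimensional ℂ L] (D : LieDerivation ℂ L L) (m : ℕ) (hm : 1 ≤ m)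
    (hDm : D.toLinearMap ^ m = 1) :
    ∃ E : LieDerivation ℂ L L,
      E.toLinearMap ∘ₗ D.toLinearMap = LinearMap.id ∧
      D.toLinearMap ∘ₗ E.toLinearMap = LinearMap.id := by
  set E : End ℂ L := D.toLinearMap ^ (m - 1)
  have hED : E * D = 1 := by rw [← pow_succ, Nat.sub_add_cancel hm, hDm]
  have hDE : (D : End ℂ L) * E = 1 := by rw [← pow_succ', Nat.sub_add_cancel hm, hDm]
  have hunit {μ : ℂ} (hμ : HasEigenvalue (D : End ℂ L) μ) : ‖μ‖ = 1 :=
    Complex.norm_eq_one_of_pow_eq_one (hμ.pow_eq_one hDm) (by omega)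
  have hleib := D.leftInverse_apply_lie_eq_add
    (iSup_eigenspace_eq_top_of_pow_eq_one (Nat.cast_ne_zero.mpr (by omega)) hDm) hED
    fun α β hα hβ hαβ ↦ Complex.inv_add_inv_of_norm_eq_one (hunit hα) (hunit hβ) (hunit hαβ)
  refine ⟨⟨E, fun x y ↦ ?_⟩, hED, hDE⟩
  rw [hleib, ← lie_skew, add_comm, ← sub_eq_add_neg]
end

section
/- Let g be a finite-dimensional complex Lie algebra admitting a periodic prederivation P of odd order m (P^m = id, m odd). Then g is nilpotent of class at most two, i.e., [g,[g,g]] = 0. -/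
/-- A prederivation of a Lie algebra. -/
def IsPrederivation {L : Type*} [LieRing L] [LieAlgebra ℂ L] (P : L →ₗ[ℂ] L) : Prop :=
  ∀ x y z : L, P ⁅x, ⁅y, z⁆⁆ = ⁅P x, ⁅y, z⁆⁆ + ⁅x, ⁅P y, z⁆⁆ + ⁅x, ⁅y, P z⁆⁆

/-!
Since `P ^ m = 1`, `P` is diagonalizable with eigenvalues `m`-th roots of unity. For eigenvectors
`x, y, z` with eigenvalues `α, β, γ`, the prederivation identity makes `⁅x, ⁅y, z⁆⁆` an eigenvector
with eigenvalue `α + β + γ` unless it vanishes. But three unit complex numbers whose sum has modulus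
one contain a pair summing to zero, and for odd `m` the negative of an `m`-th root of unity is not
one; so `α + β + γ` is never an `m`-th root of unity, and the triple bracket vanishes on a spanning
set of eigenvectors.
-/

open Module End Polynomial

namespace Complex

/-- Conjugation inverts unit complex numbers, so `(a + b + c)⁻¹ = a⁻¹ + b⁻¹ + c⁻¹`, i.e.
`(a + b + c) (a b + b c + c a) = a b c`; the difference of the two sides is
`(a + b) (b + c) (c + a)`. -/
theorem add_mul_add_mul_add_eq_zero_of_norm_eq_one {a b c : ℂ} (ha : ‖a‖ = 1) (hb : ‖b‖ = 1)
    (hc : ‖c‖ = 1) (habc : ‖a + b + c‖ = 1) : (a + b) * (b + c) * (c + a) = 0 := by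
  have hne : ∀ {z : ℂ}, ‖z‖ = 1 → z ≠ 0 := fun hz h0 => by simp [h0] at hz
  have hinv : (a + b + c)⁻¹ = a⁻¹ + b⁻¹ + c⁻¹ := by
    rw [inv_eq_conj habc, inv_eq_conj ha, inv_eq_conj hb, inv_eq_conj hc, map_add, map_add]
  field_simp [hne ha, hne hb, hne hc, hne habc] at hinv
  linear_combination -hinv

theorem add_add_pow_ne_one_of_odd {m : ℕ} (hm : Odd m) {a b c : ℂ} (ha : a ^ m = 1)
    (hb : b ^ m = 1) (hc : c ^ m = 1) : (a + b + c) ^ m ≠ 1 := by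
  intro habc
  have hm0 : m ≠ 0 := hm.pos.ne'
  have hneg : ∀ {u v : ℂ}, u ^ m = 1 → v ^ m = 1 → u + v ≠ 0 := fun hu hv huv => by
    rw [eq_neg_of_add_eq_zero_right huv, hm.neg_pow, hu] at hv
    norm_num at hv
  have := add_mul_add_mul_add_eq_zero_of_norm_eq_one (norm_eq_one_of_pow_eq_one ha hm0)
    (norm_eq_one_of_pow_eq_one hb hm0) (norm_eq_one_of_pow_eq_one hc hm0)
    (norm_eq_one_of_pow_eq_one habc hm0)
  simp only [mul_eq_zero] at this
  rcases this with (h | h) | h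
  exacts [hneg ha hb h, hneg hb hc h, hneg hc ha h]

end Complex

namespace Module.End

variable {K M : Type*} [Field K] [AddCommGroup M] [Module K M] {f : End K M} {m : ℕ}

theorem isSemisimple_of_pow_eq_one (hm : (m : K) ≠ 0) (hf : f ^ m = 1) : f.IsSemisimple :=
  isSemisimple_of_squarefree_aeval_eq_zero (separable_X_pow_sub_C 1 hm one_ne_zero).squarefree
    (by simp [hf])

theorem HasEigenvector.pow_eq_one {μ : K} {x : M} (hx : f.HasEigenvector μ x) (hf : f ^ m = 1) :
    μ ^ m = 1 := by
  have h := hx.pow_apply m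
  rw [hf, one_apply] at h
  exact smul_left_injective K hx.2 (h.symm.trans (one_smul K x).symm)

end Module.End

theorem lie_lie_eq_zero_of_iSup_eq_top {R L ι : Type*} [CommRing R] [LieRing L] [LieAlgebra R L]
    {N : ι → Submodule R L} (hN : ⨆ i, N i = ⊤)
    (h : ∀ i j k, ∀ x ∈ N i, ∀ y ∈ N j, ∀ z ∈ N k, ⁅x, ⁅y, z⁆⁆ = 0) (x y z : L) :
    ⁅x, ⁅y, z⁆⁆ = 0 := by
  have hind : ∀ {p : L → Prop}, (∀ i, ∀ a ∈ N i, p a) → p 0 →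
      (∀ a b, p a → p b → p (a + b)) → ∀ a, p a := fun hN' h0 hadd a =>
    Submodule.iSup_induction N (motive := _) (hN ▸ Submodule.mem_top) hN' h0 hadd
  revert x y z
  refine hind (fun i x hx => ?_) (by simp) fun a b ha hb y z => by rw [add_lie, ha, hb, add_zero]
  refine hind (fun j y hy => ?_) (by simp) fun a b ha hb z => by
    rw [add_lie, lie_add, ha, hb, add_zero]
  refine hind (fun k z hz => h i j k x hx y hy z hz) (by simp) fun a b ha hb => by
    rw [lie_add, lie_add, ha, hb, add_zero]

theorem IsPrederivation.lie_lie_mem_eigenspace {L : Type*} [LieRing L] [LieAlgebra ℂ L]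
    {P : L →ₗ[ℂ] L} (hP : IsPrederivation P) {α β γ : ℂ} {x y z : L} (hx : x ∈ eigenspace P α)
    (hy : y ∈ eigenspace P β) (hz : z ∈ eigenspace P γ) :
    ⁅x, ⁅y, z⁆⁆ ∈ eigenspace P (α + β + γ) := by
  rw [mem_eigenspace_iff] at hx hy hz ⊢
  rw [hP, hx, hy, hz, smul_lie, smul_lie, lie_smul, lie_smul, lie_smul, add_smul, add_smul]

theorem two_step_of_odd_periodic_prederivation (L : Type*) [LieRing L] [LieAlgebra ℂ L]
    [FiniteDimensional ℂ L] (P : L →ₗ[ℂ] L) (hP : IsPrederivation P)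
    (m : ℕ) (hodd : Odd m) (hPm : P ^ m = 1) :
    ∀ x y z : L, ⁅x, ⁅y, z⁆⁆ = 0 := by
  have hss : IsSemisimple P := isSemisimple_of_pow_eq_one (Nat.cast_ne_zero.mpr hodd.pos.ne') hPm
  refine lie_lie_eq_zero_of_iSup_eq_top hss.iSup_eigenspace_eq_top
    fun α β γ x hx y hy z hz => ?_
  by_contra hxyz
  have hx0 : x ≠ 0 := by rintro rfl; simp at hxyz
  have hy0 : y ≠ 0 := by rintro rfl; simp at hxyz
  have hz0 : z ≠ 0 := by rintro rfl; simp at hxyz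
  exact Complex.add_add_pow_ne_one_of_odd hodd (HasEigenvector.pow_eq_one ⟨hx, hx0⟩ hPm)
    (HasEigenvector.pow_eq_one ⟨hy, hy0⟩ hPm) (HasEigenvector.pow_eq_one ⟨hz, hz0⟩ hPm)
    (HasEigenvector.pow_eq_one ⟨hP.lie_lie_mem_eigenspace hx hy hz, hxyz⟩ hPm)
end
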